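/- For partitions X and Y of a finite set, X is refined by Y if and only if for every probability distribution μ on the set, the Shannon entropy of X (as a random variable induced by μ) is at most the Shannon entropy of Y. -/

import Mathlib

/-!
If `Y` refines `X`, every block of `X` is a disjoint union of blocks of `Y`, so its mass is a sum
of their masses; since `t ↦ -t log t` is subadditive on `[0, ∞)`, splitting blocks can only
increase entropy. Conversely, if some block `B` of `Y` meets two distinct blocks of `X`, the
uniform distribution on `B` gives `Y` entropy `0`, while the block of `X` containing one of those
points has mass strictly between `0` and `1`, so `X` has positive entropy.
-/

open Finset

variable {σ : Type*} [Fintype σ] [DecidableEq σ]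

/-- A probability distribution on a finite type. -/
def IsDist (μ : σ → ℝ) : Prop := (∀ x, 0 ≤ μ x) ∧ ∑ x, μ x = 1

/-- `Refines X Y` : `X ⊑ Y`, i.e. every block of `Y` is contained in some block of `X`. -/
def Refines (X Y : Finpartition (univ : Finset σ)) : Prop :=
  ∀ B ∈ Y.parts, ∃ C ∈ X.parts, B ⊆ C

/-- The common refinement (the paper's join `X ⊔ Y`). -/
def pJoin (X Y : Finpartition (univ : Finset σ)) : Finpartition (univ : Finset σ) := X ⊓ Y

/-- The setoid associated to a finpartition. -/
def toSetoid (X : Finpartition (univ : Finset σ)) : Setoid σ where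
  r x y := ∃ B ∈ X.parts, x ∈ B ∧ y ∈ B
  iseqv := by
    constructor
    · intro x
      obtain ⟨B, hB, hx⟩ := X.exists_mem (mem_univ x)
      exact ⟨B, hB, hx, hx⟩
    · rintro x y ⟨B, hB, hx, hy⟩; exact ⟨B, hB, hy, hx⟩
    · rintro x y z ⟨B, hB, hx, hy⟩ ⟨C, hC, hy', hz⟩
      exact ⟨B, hB, hx, X.eq_of_mem_parts hC hB hy' hy ▸ hz⟩

/-- The coarsest common coarsening (the paper's meet `X ⊓ Y`). -/
noncomputable def pMeet (X Y : Finpartition (univ : Finset σ)) : Finpartition (univ : Finset σ) :=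
  letI : DecidableRel (toSetoid X ⊔ toSetoid Y).r := Classical.decRel _
  Finpartition.ofSetoid (toSetoid X ⊔ toSetoid Y)

/-- Sum of the `n` largest `μ`-probabilities among the elements of `B`. -/
def gGuess (μ : σ → ℝ) (n : ℕ) (B : Finset σ) : ℝ :=
  (B.powerset.filter fun S => S.card ≤ n).sup' ⟨∅, by simp⟩ fun S => ∑ x ∈ S, μ x

/-- Expected probability of guessing in `n` tries given partition `X`. -/
def GGuess (μ : σ → ℝ) (n : ℕ) (X : Finpartition (univ : Finset σ)) : ℝ :=
  ∑ B ∈ X.parts, gGuess μ n B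

/-- Expected number of guesses for a block `B` (elements asked in order of
decreasing probability, i.e. the ordering minimising the expected rank). -/
noncomputable def NGset (μ : σ → ℝ) (B : Finset σ) : ℝ :=
  ⨅ e : B ≃ Fin B.card, ∑ x ∈ B.attach, ((e x : ℕ) + 1 : ℝ) * μ x

/-- Expected number of guesses given a partition. -/
noncomputable def NGpart (μ : σ → ℝ) (X : Finpartition (univ : Finset σ)) : ℝ :=
  ∑ B ∈ X.parts, NGset μ B

/-- Shannon entropy (base 2) of the block distribution induced by `μ` on `X`. -/
noncomputable def entropy (μ : σ → ℝ) (X : Finpartition (univ : Finset σ)) : ℝ :=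
  - ∑ B ∈ X.parts, (∑ x ∈ B, μ x) * Real.logb 2 (∑ x ∈ B, μ x)

/-- Conditional entropy `H(X|Y) = H(X ⊔ Y) - H(Y)`. -/
noncomputable def condEntropy (μ : σ → ℝ) (X Y : Finpartition (univ : Finset σ)) : ℝ :=
  entropy μ (pJoin X Y) - entropy μ Y

/-- Mutual information `I(X;Y) = H(X) + H(Y) - H(X ⊔ Y)`. -/
noncomputable def mutualInfo (μ : σ → ℝ) (X Y : Finpartition (univ : Finset σ)) : ℝ :=
  entropy μ X + entropy μ Y - entropy μ (pJoin X Y)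

/-- Maximum probability in a block. -/
noncomputable def fmax (μ : σ → ℝ) (B : Finset σ) : ℝ := ((B.image μ).max).unbotD 0

/-- Min-entropy leakage of a partition. -/
noncomputable def MEleak (μ : σ → ℝ) (X : Finpartition (univ : Finset σ)) : ℝ :=
  Real.logb 2 (∑ B ∈ X.parts, fmax μ B) - Real.logb 2 (fmax μ (univ : Finset σ))

/-- Kernel partition of a function on a finite type. -/
def kerP {O : Type*} [DecidableEq O] (f : σ → O) : Finpartition (univ : Finset σ) :=
  letI : DecidableRel (Setoid.ker f).r := fun a b => decEq (f a) (f b)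
  Finpartition.ofSetoid (Setoid.ker f)

open Real

namespace Finpartition

variable {α : Type*} [DecidableEq α] {s C : Finset α} {P Q : Finpartition s}

theorem biUnion_filter_subset_of_le (h : Q ≤ P) (hC : C ∈ P.parts) :
    (Q.parts.filter (· ⊆ C)).biUnion id = C := by
  ext x
  simp only [mem_biUnion, mem_filter, id]
  refine ⟨fun ⟨B, ⟨_, hBC⟩, hxB⟩ => hBC hxB, fun hx => ?_⟩
  obtain ⟨B, hB, hxB⟩ := Q.exists_mem (P.le hC hx)
  obtain ⟨C', hC', hBC'⟩ := h hB
  rw [P.eq_of_mem_parts hC hC' hx (hBC' hxB)]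
  exact ⟨B, ⟨hB, hBC'⟩, hxB⟩

theorem sum_filter_subset_sum_of_le {M : Type*} [AddCommMonoid M] (h : Q ≤ P)
    (hC : C ∈ P.parts) (f : α → M) :
    ∑ B ∈ Q.parts.filter (· ⊆ C), ∑ x ∈ B, f x = ∑ x ∈ C, f x := by
  have hsplit := sum_biUnion (Q.disjoint.subset (coe_subset.2 (filter_subset (· ⊆ C) _))) (f := f)
  rw [biUnion_filter_subset_of_le h hC] at hsplit
  exact hsplit.symm

theorem sum_parts_eq_sum_sum_filter_subset {M : Type*} [AddCommMonoid M] (h : Q ≤ P)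
    (f : Finset α → M) :
    ∑ B ∈ Q.parts, f B = ∑ C ∈ P.parts, ∑ B ∈ Q.parts.filter (· ⊆ C), f B := by
  have hcover : P.parts.biUnion (fun C => Q.parts.filter (· ⊆ C)) = Q.parts := by
    ext B
    simp only [mem_biUnion, mem_filter]
    exact ⟨fun ⟨_, _, hB, _⟩ => hB, fun hB => (h hB).imp fun C ⟨hC, hBC⟩ => ⟨hC, hB, hBC⟩⟩
  rw [← sum_biUnion, hcover]
  intro C hC C' hC' hne
  simp only [Function.onFun, disjoint_left, mem_filter]
  rintro B ⟨hB, hBC⟩ ⟨-, hBC'⟩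
  obtain ⟨x, hx⟩ := Q.nonempty_of_mem_parts hB
  exact hne (P.eq_of_mem_parts hC hC' (hBC hx) (hBC' hx))

theorem exists_mem_notMem_part_of_not_le (h : ¬Q ≤ P) :
    ∃ B ∈ Q.parts, ∃ a ∈ B, ∃ b ∈ B, b ∉ P.part a := by
  obtain ⟨B, hB, hBC⟩ : ∃ B ∈ Q.parts, ∀ C ∈ P.parts, ¬B ⊆ C := by
    by_contra! H
    exact h fun B hB => H B hB
  obtain ⟨a, ha⟩ := Q.nonempty_of_mem_parts hB
  obtain ⟨b, hb, hbC⟩ := not_subset.1 (hBC _ (P.part_mem.2 (Q.le hB ha)))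
  exact ⟨B, hB, a, ha, b, hb, hbC⟩

end Finpartition

namespace Real

theorem negMulLog_sum_le {ι : Type*} (s : Finset ι) {f : ι → ℝ} (hf : ∀ i ∈ s, 0 ≤ f i) :
    negMulLog (∑ i ∈ s, f i) ≤ ∑ i ∈ s, negMulLog (f i) := by
  simp only [negMulLog, neg_mul, sum_neg_distrib, neg_le_neg_iff, sum_mul]
  refine sum_le_sum fun i hi => ?_
  rcases (hf i hi).eq_or_lt with h0 | hpos
  · simp [← h0]
  · exact mul_le_mul_of_nonneg_left (log_le_log hpos (single_le_sum hf hi)) hpos.le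

theorem negMulLog_pos {x : ℝ} (h0 : 0 < x) (h1 : x < 1) : 0 < negMulLog x := by
  rw [negMulLog, neg_mul, neg_pos]
  exact mul_log_neg h0 h1

end Real

theorem refines_iff_le {X Y : Finpartition (univ : Finset σ)} : Refines X Y ↔ Y ≤ X := Iff.rfl

theorem entropy_eq_sum_negMulLog (μ : σ → ℝ) (X : Finpartition (univ : Finset σ)) :
    entropy μ X = (∑ B ∈ X.parts, negMulLog (∑ x ∈ B, μ x)) / log 2 := by
  rw [entropy, sum_div, ← sum_neg_distrib]
  refine sum_congr rfl fun B _ => ?_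
  rw [negMulLog, logb]
  ring

theorem IsDist.sum_le_one {ι : Type*} [Fintype ι] {μ : ι → ℝ} (hμ : IsDist μ) (B : Finset ι) :
    ∑ x ∈ B, μ x ≤ 1 :=
  hμ.2 ▸ sum_le_sum_of_subset_of_nonneg (subset_univ B) fun x _ _ => hμ.1 x

theorem entropy_le_entropy_of_le {μ : σ → ℝ} (hμ : ∀ x, 0 ≤ μ x)
    {X Y : Finpartition (univ : Finset σ)} (h : Y ≤ X) : entropy μ X ≤ entropy μ Y := by
  rw [entropy_eq_sum_negMulLog, entropy_eq_sum_negMulLog]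
  refine div_le_div_of_nonneg_right ?_ (log_pos one_lt_two).le
  calc ∑ C ∈ X.parts, negMulLog (∑ x ∈ C, μ x)
      = ∑ C ∈ X.parts, negMulLog (∑ B ∈ Y.parts.filter (· ⊆ C), ∑ x ∈ B, μ x) :=
        sum_congr rfl fun C hC => by rw [Finpartition.sum_filter_subset_sum_of_le h hC]
    _ ≤ ∑ C ∈ X.parts, ∑ B ∈ Y.parts.filter (· ⊆ C), negMulLog (∑ x ∈ B, μ x) :=
        sum_le_sum fun C _ => negMulLog_sum_le _ fun B _ => sum_nonneg fun x _ => hμ x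
    _ = ∑ B ∈ Y.parts, negMulLog (∑ x ∈ B, μ x) :=
        (Finpartition.sum_parts_eq_sum_sum_filter_subset h _).symm

theorem entropy_eq_zero_of_support_subset {μ : σ → ℝ} (hμ : IsDist μ)
    {X : Finpartition (univ : Finset σ)} {B : Finset σ} (hB : B ∈ X.parts)
    (hsupp : ∀ x ∉ B, μ x = 0) : entropy μ X = 0 := by
  rw [entropy_eq_sum_negMulLog, sum_eq_zero, zero_div]
  intro D hD
  by_cases hDB : D = B
  · rw [hDB, sum_subset (subset_univ B) fun x _ hx => hsupp x hx, hμ.2, negMulLog_one]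
  · have hdisj : Disjoint D B := X.disjoint hD hB hDB
    rw [sum_eq_zero fun x hx => hsupp x (disjoint_left.1 hdisj hx), negMulLog_zero]

theorem entropy_pos_of_notMem_part {μ : σ → ℝ} (hμ : IsDist μ)
    {X : Finpartition (univ : Finset σ)} {a b : σ} (ha : 0 < μ a) (hb : 0 < μ b)
    (hab : b ∉ X.part a) : 0 < entropy μ X := by
  have hC : X.part a ∈ X.parts := X.part_mem.2 (mem_univ a)
  have hmass_pos : 0 < ∑ x ∈ X.part a, μ x :=
    ha.trans_le (single_le_sum (fun x _ => hμ.1 x) (X.mem_part_self.2 (mem_univ a)))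
  have hmass_lt_one : ∑ x ∈ X.part a, μ x < 1 := by
    have := hμ.sum_le_one (insert b (X.part a))
    rw [sum_insert hab] at this
    linarith
  rw [entropy_eq_sum_negMulLog]
  refine div_pos (sum_pos' (fun D _ => negMulLog_nonneg (sum_nonneg fun x _ => hμ.1 x)
    (hμ.sum_le_one D)) ⟨_, hC, negMulLog_pos hmass_pos hmass_lt_one⟩) (log_pos one_lt_two)

section UniformDist

variable {ι : Type*} [DecidableEq ι] {B : Finset ι} {x : ι}

noncomputable def uniformDist (B : Finset ι) (x : ι) : ℝ := if x ∈ B then (#B : ℝ)⁻¹ else 0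

theorem isDist_uniformDist [Fintype ι] (hB : B.Nonempty) : IsDist (uniformDist B) := by
  unfold uniformDist
  refine ⟨fun x => by positivity, ?_⟩
  rw [sum_ite_mem, univ_inter, sum_const, nsmul_eq_mul,
    mul_inv_cancel₀ (Nat.cast_ne_zero.2 hB.card_pos.ne')]

theorem uniformDist_pos (hx : x ∈ B) : 0 < uniformDist B x := by
  rw [uniformDist, if_pos hx]
  exact inv_pos.2 (Nat.cast_pos.2 (card_pos.2 ⟨x, hx⟩))

theorem uniformDist_of_notMem (hx : x ∉ B) : uniformDist B x = 0 :=
  if_neg hx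

end UniformDist

theorem refines_iff_forall_entropy_le (X Y : Finpartition (univ : Finset σ)) :
    Refines X Y ↔ ∀ μ : σ → ℝ, IsDist μ → entropy μ X ≤ entropy μ Y := by
  rw [refines_iff_le]
  refine ⟨fun h μ hμ => entropy_le_entropy_of_le hμ.1 h, fun h => by_contra fun hYX => ?_⟩
  obtain ⟨B, hB, a, ha, b, hb, hab⟩ := Finpartition.exists_mem_notMem_part_of_not_le hYX
  have hμ := isDist_uniformDist ⟨a, ha⟩
  have hY := entropy_eq_zero_of_support_subset hμ hB fun x => uniformDist_of_notMem
  have hX := entropy_pos_of_notMem_part hμ (uniformDist_pos ha) (uniformDist_pos hb) hab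
  linarith [h _ hμ]
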